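/- arXiv:2506.05583 — 4 statements merged into one kernel-verified Lean document; each statement's English description precedes it below -/
import Mathlib

section
/- Let S_1,...,S_n,S_{n+1} be exchangeable real-valued random variables. Let q̂ be the ⌈(n+1)(1-α)⌉-th smallest value among S_1,...,S_n (for α ∈ (0,1) with ⌈(n+1)(1-α)⌉ ≤ n). Then P(S_{n+1} ≤ q̂) ≥ 1 - α. -/
open MeasureTheory Finset
open scoped ENNReal

/-!
Write `rank v j` for the number of coordinates of `v` strictly below `v j`. For every vector of
`n + 1` scores at least `k` indices have rank `< k` (the first `k` in sorted order), so the
`n + 1` events `{rank (S ·) j < k}` have expected total count at least `k`. By exchangeability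
they all have the same probability, hence `P(rank S_{n+1} < k) ≥ k / (n + 1) ≥ 1 - α`. Finally,
if fewer than `k` calibration scores lie strictly below `S_{n+1}`, then every `x` with at least
`k` calibration scores `≤ x` satisfies `x ≥ S_{n+1}`, i.e. `S_{n+1} ≤ q̂`.
-/

section Rank

variable {ι α : Type*} [Fintype ι] [LinearOrder α]

def rank (v : ι → α) (j : ι) : ℕ := #{i | v i < v j}

lemma rank_comp_perm (v : ι → α) (σ : Equiv.Perm ι) (j : ι) :
    rank (v ∘ σ) j = rank v (σ j) := by
  simp only [rank, card_filter, Function.comp_apply]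
  exact Equiv.sum_comp σ fun i => if v i < v (σ j) then 1 else 0

lemma rank_last {n : ℕ} (v : Fin (n + 1) → α) :
    rank v (Fin.last n) = #{i : Fin n | v i.castSucc < v (Fin.last n)} := by
  rw [rank, card_filter, card_filter, Fin.sum_univ_castSucc]
  simp

lemma rank_sort_le {N : ℕ} (v : Fin N → α) (m : Fin N) : rank v (Tuple.sort v m) ≤ m := by
  calc rank v (Tuple.sort v m) ≤ #((Iio m).map (Tuple.sort v).toEmbedding) := card_le_card ?_
    _ = m := by simp
  intro i hi
  simp only [mem_filter, mem_univ, true_and] at hi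
  simp only [mem_map_equiv, mem_Iio]
  by_contra! h
  exact hi.not_ge (by simpa using Tuple.monotone_sort v h)

lemma le_card_rank_lt {N k : ℕ} (v : Fin N → α) (hk : k ≤ N) :
    k ≤ #{j | rank v j < k} := by
  calc k = #(univ.map ((Fin.castLEEmb hk).trans (Tuple.sort v).toEmbedding)) := by simp
    _ ≤ _ := card_le_card ?_
  intro j hj
  obtain ⟨m, -, rfl⟩ := mem_map.1 hj
  simpa using (rank_sort_le v _).trans_lt m.2

end Rank

lemma measurable_rank {ι : Type*} [Fintype ι] (j : ι) :
    Measurable fun v : ι → ℝ => rank v j := by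
  simp_rw [rank, card_filter]
  exact Finset.measurable_sum _ fun i _ => Measurable.ite
    (measurableSet_lt (measurable_pi_apply i) (measurable_pi_apply j)) measurable_const
    measurable_const

lemma le_sInf_of_card_lt {ι α : Type*} [Fintype ι] [ConditionallyCompleteLinearOrder α]
    {k : ℕ} (v : ι → α) {y : α} (hk : k ≤ Fintype.card ι) (hy : #{i | v i < y} < k) :
    y ≤ sInf {x | k ≤ #{i | v i ≤ x}} := by
  have : Nonempty α := ⟨y⟩
  obtain ⟨M, hM⟩ := (Set.finite_range v).bddAbove
  refine le_csInf ⟨M, ?_⟩ fun b hb => ?_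
  · rwa [Set.mem_ofPred_eq, filter_true_of_mem fun i _ => hM ⟨i, rfl⟩, card_univ]
  · by_contra! hby
    have hcard : #{i | v i ≤ b} ≤ #{i | v i < y} := card_le_card <|
      monotone_filter_right _ fun i _ hi => hi.trans_lt hby
    exact (hb.trans hcard).not_gt hy

lemma nat_mul_measure_univ_le_sum_measure {Ω ι : Type*} [MeasurableSpace Ω] [Fintype ι]
    (μ : Measure Ω) {p : Ω → ι → Prop} [∀ ω, DecidablePred (p ω)]
    (hp : ∀ j, MeasurableSet {ω | p ω j}) {k : ℕ} (hk : ∀ ω, k ≤ #{j | p ω j}) :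
    k * μ Set.univ ≤ ∑ j, μ {ω | p ω j} := by
  calc (k : ℝ≥0∞) * μ Set.univ = ∫⁻ _, (k : ℝ≥0∞) ∂μ := (lintegral_const _).symm
    _ ≤ ∫⁻ ω, ∑ j, {ω | p ω j}.indicator 1 ω ∂μ := lintegral_mono fun ω => ?_
    _ = ∑ j, μ {ω | p ω j} := by
      rw [lintegral_finsetSum _ fun j _ => measurable_one.indicator (hp j)]
      simp only [lintegral_indicator_one (hp _)]
  calc (k : ℝ≥0∞) ≤ #{j | p ω j} := by exact_mod_cast hk ω
    _ = ∑ j, {ω | p ω j}.indicator 1 ω := by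
      rw [card_filter]
      push_cast
      simp [Set.indicator_apply]

lemma measure_rank_lt_eq_of_exchangeable {Ω ι : Type*} [MeasurableSpace Ω] [Fintype ι]
    [DecidableEq ι] {μ : Measure Ω} {X : Ω → ι → ℝ} (hX : Measurable X)
    (hexch : ∀ σ : Equiv.Perm ι, μ.map (fun ω i => X ω (σ i)) = μ.map X)
    (k : ℕ) (i j : ι) :
    μ {ω | rank (X ω) i < k} = μ {ω | rank (X ω) j < k} := by
  have hA : MeasurableSet {v : ι → ℝ | rank v j < k} := measurable_rank j measurableSet_Iio
  have hXσ : Measurable fun ω i' => X ω (Equiv.swap j i i') := by fun_prop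
  have hpre : {ω | rank (X ω) i < k} =
      (fun ω i' => X ω (Equiv.swap j i i')) ⁻¹' {v | rank v j < k} := by
    ext ω
    simp [← Function.comp_def (X ω), rank_comp_perm]
  rw [hpre, ← Measure.map_apply hXσ hA, hexch, Measure.map_apply hX hA]
  rfl

lemma ofReal_le_of_natCeil_le_mul {x : ℝ} {N : ℕ} {a : ℝ≥0∞} (hN : N ≠ 0)
    (h : (⌈N * x⌉₊ : ℝ≥0∞) ≤ N * a) : ENNReal.ofReal x ≤ a := by
  refine (ENNReal.mul_le_mul_iff_right (a := N) (mod_cast hN) (ENNReal.natCast_ne_top N)).1 ?_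
  calc N * ENNReal.ofReal x = ENNReal.ofReal (N * x) := by
        rw [ENNReal.ofReal_mul (by positivity), ENNReal.ofReal_natCast]
    _ ≤ ENNReal.ofReal ⌈N * x⌉₊ := ENNReal.ofReal_le_ofReal (Nat.le_ceil _)
    _ = ⌈N * x⌉₊ := ENNReal.ofReal_natCast _
    _ ≤ N * a := h

theorem conformal_coverage_lower_general
    {Ω : Type*} [MeasurableSpace Ω] (μ : Measure Ω) [IsProbabilityMeasure μ]
    (n : ℕ) (S : Fin (n + 1) → Ω → ℝ) (hS : ∀ i, Measurable (S i))
    (hexch : ∀ σ : Equiv.Perm (Fin (n + 1)),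
      Measure.map (fun ω => fun i => S (σ i) ω) μ = Measure.map (fun ω => fun i => S i ω) μ)
    (α : ℝ)
    (hk : ⌈((n : ℝ) + 1) * (1 - α)⌉₊ ≤ n) :
    ENNReal.ofReal (1 - α) ≤
      μ {ω | S (Fin.last n) ω ≤
        sInf {x : ℝ | ⌈((n : ℝ) + 1) * (1 - α)⌉₊ ≤
          (Finset.univ.filter fun i : Fin n => S i.castSucc ω ≤ x).card}} := by
  set k := ⌈((n : ℝ) + 1) * (1 - α)⌉₊
  set X : Ω → Fin (n + 1) → ℝ := fun ω i => S i ω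
  have hX : Measurable X := measurable_pi_lambda _ hS
  have hrank : ∀ j, MeasurableSet {ω | rank (X ω) j < k} :=
    fun j => (measurable_rank j).comp hX measurableSet_Iio
  have hcount : (k : ℝ≥0∞) ≤ (n + 1) * μ {ω | rank (X ω) (Fin.last n) < k} := by
    calc (k : ℝ≥0∞) ≤ ∑ j, μ {ω | rank (X ω) j < k} := by
          simpa using nat_mul_measure_univ_le_sum_measure μ hrank
            fun ω => le_card_rank_lt (X ω) (hk.trans n.le_succ)
      _ = (n + 1) * μ {ω | rank (X ω) (Fin.last n) < k} := by
          simp [measure_rank_lt_eq_of_exchangeable hX hexch k _ (Fin.last n)]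
  refine (ofReal_le_of_natCeil_le_mul n.succ_ne_zero (by push_cast; exact hcount)).trans
    (measure_mono fun ω hω => ?_)
  exact le_sInf_of_card_lt (fun i : Fin n => S i.castSucc ω) (by simpa using hk)
    ((rank_last (X ω)).symm.trans_lt hω)

/-- Split conformal coverage lower bound under exchangeability. -/
theorem conformal_coverage_lower
    {Ω : Type*} [MeasurableSpace Ω] (μ : Measure Ω) [IsProbabilityMeasure μ]
    (n : ℕ) (S : Fin (n + 1) → Ω → ℝ) (hS : ∀ i, Measurable (S i))
    (hexch : ∀ σ : Equiv.Perm (Fin (n + 1)),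
      Measure.map (fun ω => fun i => S (σ i) ω) μ = Measure.map (fun ω => fun i => S i ω) μ)
    (α : ℝ) (hα : α ∈ Set.Ioo (0 : ℝ) 1)
    (hk : ⌈((n : ℝ) + 1) * (1 - α)⌉₊ ≤ n) :
    ENNReal.ofReal (1 - α) ≤
      μ {ω | S (Fin.last n) ω ≤
        sInf {x : ℝ | ⌈((n : ℝ) + 1) * (1 - α)⌉₊ ≤
          (Finset.univ.filter fun i : Fin n => S i.castSucc ω ≤ x).card}} :=
  conformal_coverage_lower_general μ n S hS hexch α hk
end

section
/- Let S_1,...,S_n,S_{n+1} be exchangeable real-valued random variables that are almost surely distinct. Let q̂ be the ⌈(n+1)(1-α)⌉-th smallest value among S_1,...,S_n, with ⌈(n+1)(1-α)⌉ ≤ n. Then P(S_{n+1} ≤ q̂) ≤ 1 - α + 1/(n+1). -/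
/-!
Let `R` be the number of scores strictly below `S (n+1)` among all `n + 1` scores and
`k = ⌈(n+1)(1-α)⌉`. Then `S (n+1) ≤ q̂` exactly when `R < k`, with no assumption on ties.
By exchangeability every score has the same probability of having fewer than `k` scores
below it, and when the scores are distinct these strict ranks are a permutation of
`0, …, n`, so exactly `k` of them are below `k`. Hence `P(R < k) = k / (n+1)`, and
`k < (n+1)(1-α) + 1`.
-/

open MeasureTheory Finset
open scoped ENNReal

section StrictRank

variable {ι β : Type*} [Fintype ι] [LinearOrder β]

def strictRank (v : ι → β) (j : ι) : ℕ := #{i | v i < v j}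

theorem strictRank_comp_perm (v : ι → β) (σ : Equiv.Perm ι) (j : ι) :
    strictRank (v ∘ σ) j = strictRank v (σ j) :=
  card_equiv σ (by simp)

theorem strictRank_lt_card (v : ι → β) (j : ι) : strictRank v j < Fintype.card ι :=
  card_lt_univ_of_notMem (x := j) (by simp)

theorem strictRank_lt_strictRank {v : ι → β} {a b : ι} (h : v a < v b) :
    strictRank v a < strictRank v b :=
  card_lt_card <| ssubset_iff_of_subset (fun i hi => by
    simp only [mem_filter, mem_univ, true_and] at hi ⊢; exact hi.trans h)
    |>.2 ⟨a, by simpa using h, by simp⟩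

theorem strictRank_injective {v : ι → β} (hv : Function.Injective v) :
    Function.Injective (strictRank v) := by
  intro a b hab
  by_contra hne
  rcases lt_or_gt_of_ne (hv.ne hne) with h | h
  · exact (strictRank_lt_strictRank h).ne hab
  · exact (strictRank_lt_strictRank h).ne' hab

theorem image_strictRank {v : ι → β} (hv : Function.Injective v) :
    univ.image (strictRank v) = range (Fintype.card ι) :=
  eq_of_subset_of_card_le (fun _ hm => by
      obtain ⟨j, -, rfl⟩ := mem_image.1 hm
      exact mem_range.2 (strictRank_lt_card v j))
    (by rw [card_image_of_injective _ (strictRank_injective hv)]; simp)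

theorem card_strictRank_lt {v : ι → β} (hv : Function.Injective v) {k : ℕ}
    (hk : k ≤ Fintype.card ι) : #{j | strictRank v j < k} = k := by
  calc #{j | strictRank v j < k}
      = #((univ.image (strictRank v)).filter (· < k)) := by
        rw [filter_image, card_image_of_injective _ (strictRank_injective hv)]
    _ = k := by
        rw [image_strictRank hv, show (range (Fintype.card ι)).filter (· < k) = range k by
          ext; simp only [mem_filter, mem_range]; omega, card_range]

theorem strictRank_last {n : ℕ} (v : Fin (n + 1) → β) :
    strictRank v (Fin.last n) = #{i : Fin n | v i.castSucc < v (Fin.last n)} := by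
  simp only [strictRank, card_filter, Fin.sum_univ_castSucc, lt_irrefl, if_false, add_zero]

end StrictRank

section OrderStatistic

variable {ι β : Type*} [Fintype ι] [ConditionallyCompleteLinearOrder β]

def orderStatistic (w : ι → β) (k : ℕ) : β := sInf {t | k ≤ #{i | w i ≤ t}}

theorem le_orderStatistic_iff (w : ι → β) {k : ℕ} (hk₀ : 1 ≤ k) (hk : k ≤ Fintype.card ι)
    (x : β) : x ≤ orderStatistic w k ↔ #{i | w i < x} < k := by
  have : Nonempty ι := Fintype.card_pos_iff.1 (by omega)
  obtain ⟨m, hm⟩ := Finite.bddBelow_range w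
  obtain ⟨M, hM⟩ := Finite.bddAbove_range w
  have hne : {t | k ≤ #{i | w i ≤ t}}.Nonempty :=
    ⟨M, by simpa [filter_true_of_mem fun i _ => hM (Set.mem_range_self i)] using hk⟩
  have hbdd : BddBelow {t | k ≤ #{i | w i ≤ t}} := by
    refine ⟨m, fun t ht => ?_⟩
    obtain ⟨i, hi⟩ := card_pos.1 (Nat.lt_of_lt_of_le hk₀ ht)
    exact (hm (Set.mem_range_self i)).trans (mem_filter.1 hi).2
  constructor
  · intro hx
    by_contra! hcard
    obtain ⟨i₀, hi₀, hmax⟩ :=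
      exists_max_image {i | w i < x} w (card_pos.1 (Nat.lt_of_lt_of_le hk₀ hcard))
    have hin : w i₀ ∈ {t | k ≤ #{i | w i ≤ t}} :=
      hcard.trans (card_le_card fun i hi => by
        simp only [mem_filter, mem_univ, true_and] at hi ⊢; exact hmax i (by simpa using hi))
    exact (hx.trans (csInf_le hbdd hin)).not_gt (by simpa using hi₀)
  · intro hcard
    refine le_csInf hne fun t ht => ?_
    by_contra! htx
    exact (ht.trans (card_le_card fun i hi => by
      simp only [mem_filter, mem_univ, true_and] at hi ⊢; exact hi.trans_lt htx)).not_gt hcard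

end OrderStatistic

section Exchangeable

variable {Ω ι : Type*} [MeasurableSpace Ω] [Fintype ι] {μ : Measure Ω}

theorem measurable_strictRank (j : ι) : Measurable fun v : ι → ℝ => strictRank v j := by
  simp only [strictRank, card_filter]
  refine Finset.measurable_sum _ fun i _ => Measurable.ite ?_ measurable_const measurable_const
  exact measurableSet_lt (measurable_pi_apply i) (measurable_pi_apply j)

theorem measure_strictRank_lt_eq {X : Ω → ι → ℝ} (hX : Measurable X)
    (hexch : ∀ σ : Equiv.Perm ι, μ.map (fun ω => X ω ∘ σ) = μ.map X) (k : ℕ) (i j : ι) :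
    μ {ω | strictRank (X ω) i < k} = μ {ω | strictRank (X ω) j < k} := by
  have hB : MeasurableSet {v : ι → ℝ | strictRank v j < k} :=
    measurable_strictRank j measurableSet_Iio
  classical
  have hXσ : Measurable fun ω => X ω ∘ Equiv.swap i j := by fun_prop
  calc μ {ω | strictRank (X ω) i < k}
      = μ.map (fun ω => X ω ∘ Equiv.swap i j) {v | strictRank v j < k} := by
        rw [Measure.map_apply hXσ hB]
        simp [Set.preimage, strictRank_comp_perm]
    _ = μ {ω | strictRank (X ω) j < k} := by rw [hexch, Measure.map_apply hX hB]; rfl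

open Classical in
theorem sum_measure_eq_of_ae_card_eq {s : ι → Set Ω} (hs : ∀ j, MeasurableSet (s j)) {k : ℕ}
    (h : ∀ᵐ ω ∂μ, #{j | ω ∈ s j} = k) : ∑ j, μ (s j) = k * μ Set.univ := by
  calc ∑ j, μ (s j) = ∫⁻ ω, ∑ j, (s j).indicator 1 ω ∂μ := by
        rw [lintegral_finsetSum _ fun j _ => measurable_one.indicator (hs j)]
        simp only [lintegral_indicator_one (hs _)]
    _ = ∫⁻ _, (k : ℝ≥0∞) ∂μ := by
        refine lintegral_congr_ae (h.mono fun ω hω => ?_)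
        simp only [Set.indicator_apply, Pi.one_apply, sum_boole, hω]
    _ = k * μ Set.univ := lintegral_const _

theorem card_mul_measure_strictRank_lt {X : Ω → ι → ℝ} (hX : Measurable X)
    (hexch : ∀ σ : Equiv.Perm ι, μ.map (fun ω => X ω ∘ σ) = μ.map X)
    (hinj : ∀ᵐ ω ∂μ, Function.Injective (X ω)) {k : ℕ} (hk : k ≤ Fintype.card ι) (j : ι) :
    Fintype.card ι * μ {ω | strictRank (X ω) j < k} = k * μ Set.univ :=
  calc Fintype.card ι * μ {ω | strictRank (X ω) j < k}
      = ∑ i, μ {ω | strictRank (X ω) i < k} := by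
        simp [measure_strictRank_lt_eq hX hexch k _ j]
    _ = k * μ Set.univ :=
        sum_measure_eq_of_ae_card_eq (s := fun i => {ω | strictRank (X ω) i < k})
          (fun i => hX (measurable_strictRank i measurableSet_Iio))
          (hinj.mono fun _ hω => by simpa using card_strictRank_lt hω hk)

end Exchangeable

/-- Split conformal coverage upper bound under exchangeability and a.s. distinct scores. -/
theorem conformal_coverage_upper
    {Ω : Type*} [MeasurableSpace Ω] (μ : Measure Ω) [IsProbabilityMeasure μ]
    (n : ℕ) (S : Fin (n + 1) → Ω → ℝ) (hS : ∀ i, Measurable (S i))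
    (hexch : ∀ σ : Equiv.Perm (Fin (n + 1)),
      Measure.map (fun ω => fun i => S (σ i) ω) μ = Measure.map (fun ω => fun i => S i ω) μ)
    (hdist : ∀ᵐ ω ∂μ, Function.Injective fun i => S i ω)
    (α : ℝ) (hα : α ∈ Set.Ioo (0 : ℝ) 1)
    (hk : ⌈((n : ℝ) + 1) * (1 - α)⌉₊ ≤ n) :
    μ {ω | S (Fin.last n) ω ≤
        sInf {x : ℝ | ⌈((n : ℝ) + 1) * (1 - α)⌉₊ ≤
          (Finset.univ.filter fun i : Fin n => S i.castSucc ω ≤ x).card}} ≤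
      ENNReal.ofReal (1 - α + 1 / ((n : ℝ) + 1)) := by
  set k := ⌈((n : ℝ) + 1) * (1 - α)⌉₊
  have hpos : 0 < ((n : ℝ) + 1) * (1 - α) := mul_pos (by positivity) (by linarith [hα.2])
  have hevent : {ω | S (Fin.last n) ω ≤ orderStatistic (fun i : Fin n => S i.castSucc ω) k}
      = {ω | strictRank (fun i => S i ω) (Fin.last n) < k} := by
    ext ω
    rw [Set.mem_ofPred_eq, Set.mem_ofPred_eq, strictRank_last]
    exact le_orderStatistic_iff _ (Nat.ceil_pos.2 hpos) (by rw [Fintype.card_fin]; exact hk) _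
  have hrank := card_mul_measure_strictRank_lt (measurable_pi_lambda _ hS) hexch hdist
    (k := k) (by rw [Fintype.card_fin]; omega) (Fin.last n)
  have hprob : (μ {ω | strictRank (fun i => S i ω) (Fin.last n) < k}).toReal = k / (n + 1) := by
    rw [Fintype.card_fin, measure_univ, mul_one] at hrank
    have := congrArg ENNReal.toReal hrank
    rw [ENNReal.toReal_mul, ENNReal.toReal_natCast, ENNReal.toReal_natCast] at this
    rw [eq_div_iff (by positivity), mul_comm]
    exact_mod_cast this
  change μ {ω | S (Fin.last n) ω ≤ orderStatistic (fun i : Fin n => S i.castSucc ω) k} ≤ _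
  rw [hevent, ← ENNReal.ofReal_toReal (measure_ne_top μ _), hprob]
  refine ENNReal.ofReal_le_ofReal ?_
  have hceil := Nat.ceil_lt_add_one hpos.le
  rw [div_le_iff₀ (by positivity)]
  field_simp
  linarith
end

section
/- Let (S_1,...,S_{n+1}) have a joint density proportional to a function invariant under permutations, and let w_i(x_{1:n+1}) be nonnegative weights summing to 1 that depend only on the unordered multiset of covariates. Conditional on the multiset of score values {s_1,...,s_{n+1}}, if P(S_{n+1} = s_i | multiset) = w_i for each i, then for the weighted quantile q̂ = inf{q : Σ_{i: s_i ≤ q} w_i ≥ 1-α} one has P(S_{n+1} ≤ q̂ | multiset) ≥ 1 - α. -/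
/-!
Write `F q = ∑_{s i ≤ q} w i` for the weighted empirical distribution function. It is a step
function jumping only at the values `s i`, so the infimum `q̂` defining the weighted quantile is
attained and `F q̂ ≥ 1 - α`. On the other side, conditionally on the multiset the test score is
one of the `s i`, so by the union bound over the values above `q̂` it exceeds `q̂` with probability
at most `∑_{s i > q̂} w i = 1 - F q̂ ≤ α`. Ties among the `s i` are the reason to argue through
this upper tail: the events `{S_{n+1} = s i}` need not be disjoint.
-/

open MeasureTheory ProbabilityTheory Finset

section WeightedQuantile

variable {ι : Type*} [Fintype ι] (s w : ι → ℝ)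

noncomputable def weightedCDF (q : ℝ) : ℝ :=
  ∑ i ∈ univ.filter fun i => s i ≤ q, w i

lemma exists_weightedCDF_eq_of_ne_zero {q : ℝ} (hq : weightedCDF s w q ≠ 0) :
    ∃ j, s j ≤ q ∧ weightedCDF s w (s j) = weightedCDF s w q := by
  have hne : (univ.filter fun i => s i ≤ q).Nonempty :=
    nonempty_of_sum_ne_zero hq
  obtain ⟨j, hj, hmax⟩ := exists_max_image _ s hne
  have hjq : s j ≤ q := (mem_filter.mp hj).2
  refine ⟨j, hjq, sum_congr (filter_congr fun i _ => ?_) fun _ _ => rfl⟩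
  exact ⟨fun hi => hi.trans hjq, fun hi => hmax i (mem_filter.mpr ⟨mem_univ i, hi⟩)⟩

lemma exists_isLeast_weightedCDF_ge {t : ℝ} (ht0 : 0 < t) (ht : t ≤ ∑ i, w i) :
    ∃ m, IsLeast {q | t ≤ weightedCDF s w q} m := by
  have hmem {q : ℝ} (hq : t ≤ weightedCDF s w q) :
      ∃ j, s j ≤ q ∧ t ≤ weightedCDF s w (s j) := by
    obtain ⟨j, hjq, hj⟩ := exists_weightedCDF_eq_of_ne_zero s w (by linarith)
    exact ⟨j, hjq, hj ▸ hq⟩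
  obtain ⟨b, hb⟩ := (Set.finite_range s).bddAbove
  have htop : t ≤ weightedCDF s w b := by
    rwa [weightedCDF, filter_true_of_mem fun i _ => hb (Set.mem_range_self i)]
  obtain ⟨j₀, -, hj₀⟩ := hmem htop
  obtain ⟨i, hi, hmin⟩ := exists_min_image (univ.filter fun j => t ≤ weightedCDF s w (s j)) s
    ⟨j₀, mem_filter.mpr ⟨mem_univ _, hj₀⟩⟩
  refine ⟨s i, (mem_filter.mp hi).2, fun q hq => ?_⟩
  obtain ⟨j, hjq, hj⟩ := hmem hq
  exact (hmin j (mem_filter.mpr ⟨mem_univ j, hj⟩)).trans hjq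

lemma le_weightedCDF_sInf {t : ℝ} (ht0 : 0 < t) (ht : t ≤ ∑ i, w i) :
    t ≤ weightedCDF s w (sInf {q | t ≤ weightedCDF s w q}) := by
  obtain ⟨m, hm⟩ := exists_isLeast_weightedCDF_ge s w ht0 ht
  exact hm.csInf_eq ▸ hm.1

end WeightedQuantile

lemma ofReal_weightedCDF_le_measure {ι Ω : Type*} [Fintype ι] [MeasurableSpace Ω]
    {ν : Measure Ω} {Y : Ω → ℝ} {s w : ι → ℝ} (hw0 : ∀ i, 0 ≤ w i) (hw1 : ∑ i, w i = 1)
    (hY : 1 ≤ ν {ω | Y ω ∈ Set.range s})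
    (hν : ∀ i, ν {ω | Y ω = s i} = ENNReal.ofReal (w i)) (q : ℝ) :
    ENNReal.ofReal (weightedCDF s w q) ≤ ν {ω | Y ω ≤ q} := by
  set U := univ.filter fun i => ¬s i ≤ q
  have hsplit : weightedCDF s w q + ∑ i ∈ U, w i = 1 :=
    hw1 ▸ sum_filter_add_sum_filter_not univ _ w
  have htail : ν (⋃ i ∈ U, {ω | Y ω = s i}) ≤ ENNReal.ofReal (∑ i ∈ U, w i) := by
    calc ν (⋃ i ∈ U, {ω | Y ω = s i})
        ≤ ∑ i ∈ U, ν {ω | Y ω = s i} := measure_biUnion_finset_le _ _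
      _ = ENNReal.ofReal (∑ i ∈ U, w i) := by
        simp only [hν, ENNReal.ofReal_sum_of_nonneg fun i _ => hw0 i]
  have hcover : {ω | Y ω ∈ Set.range s} ⊆ {ω | Y ω ≤ q} ∪ ⋃ i ∈ U, {ω | Y ω = s i} := by
    rintro ω ⟨j, hj⟩
    by_cases hjq : s j ≤ q
    · exact Or.inl (show Y ω ≤ q from hj ▸ hjq)
    · exact Or.inr (Set.mem_biUnion (mem_filter.mpr ⟨mem_univ j, hjq⟩) hj.symm)
  have hone : ENNReal.ofReal (weightedCDF s w q) + ENNReal.ofReal (∑ i ∈ U, w i) = 1 := by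
    have hcdf : 0 ≤ weightedCDF s w q := sum_nonneg fun i _ => hw0 i
    rw [← ENNReal.ofReal_add hcdf (sum_nonneg fun i _ => hw0 i), hsplit, ENNReal.ofReal_one]
  refine (ENNReal.add_le_add_iff_right (ENNReal.ofReal_ne_top (r := ∑ i ∈ U, w i))).mp ?_
  calc ENNReal.ofReal (weightedCDF s w q) + ENNReal.ofReal (∑ i ∈ U, w i)
      ≤ ν {ω | Y ω ∈ Set.range s} := hone ▸ hY
    _ ≤ ν {ω | Y ω ≤ q} + ν (⋃ i ∈ U, {ω | Y ω = s i}) :=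
      (measure_mono hcover).trans (measure_union_le _ _)
    _ ≤ ν {ω | Y ω ≤ q} + ENNReal.ofReal (∑ i ∈ U, w i) := add_le_add_right htail _

theorem weighted_exchangeability_coverage_general
    {Ω : Type*} [MeasurableSpace Ω] (μ : Measure Ω) [IsProbabilityMeasure μ]
    (n : ℕ) (V : Ω → Fin (n + 1) → ℝ)
    (s : Fin (n + 1) → ℝ)
    (w : Fin (n + 1) → ℝ) (hw0 : ∀ i, 0 ≤ w i) (hw1 : ∑ i, w i = 1)
    (E : Set Ω) (hE : E = {ω | Multiset.map (V ω) Finset.univ.val =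
      Multiset.map s Finset.univ.val})
    (hcond : ∀ i, μ[|E] {ω | V ω (Fin.last n) = s i} = ENNReal.ofReal (w i))
    (α : ℝ) (hα : α ∈ Set.Ioo (0 : ℝ) 1)
    (qhat : ℝ)
    (hqhat : qhat = sInf {q : ℝ |
      1 - α ≤ ∑ i ∈ Finset.univ.filter fun i : Fin (n + 1) => s i ≤ q, w i}) :
    ENNReal.ofReal (1 - α) ≤ μ[|E] {ω | V ω (Fin.last n) ≤ qhat} := by
  have hμE : μ E ≠ 0 := fun h => by
    have hw : ∀ i, w i ≤ 0 := fun i => ENNReal.ofReal_eq_zero.mp <| by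
      rw [← hcond i, cond_eq_zero_of_meas_eq_zero h, Measure.coe_zero, Pi.zero_apply]
    linarith [sum_nonpos fun i (_ : i ∈ univ) => hw i]
  have hrange : 1 ≤ μ[|E] {ω | V ω (Fin.last n) ∈ Set.range s} := by
    refine (cond_apply_self hμE (measure_ne_top μ E)).symm.le.trans (measure_mono ?_)
    intro ω hω
    rw [hE] at hω
    obtain ⟨i, -, hi⟩ := Multiset.mem_map.mp (hω ▸ Multiset.mem_map_of_mem (V ω) (mem_univ_val _))
    exact ⟨i, hi⟩
  have hquantile : 1 - α ≤ weightedCDF s w qhat :=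
    hqhat ▸ le_weightedCDF_sInf s w (by linarith [hα.2]) (by linarith [hα.1])
  exact (ENNReal.ofReal_le_ofReal hquantile).trans
    (ofReal_weightedCDF_le_measure hw0 hw1 hrange hcond qhat)

/-- Weighted exchangeability coverage lemma: conditional on the multiset of the n+1 scores,
if the test score equals the value s i with probability w i, then the weighted empirical
(1-α)-quantile covers the test score with probability at least 1-α. -/
theorem weighted_exchangeability_coverage
    {Ω : Type*} [MeasurableSpace Ω] (μ : Measure Ω) [IsProbabilityMeasure μ]
    (n : ℕ) (V : Ω → Fin (n + 1) → ℝ)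
    (hexch : ∀ σ : Equiv.Perm (Fin (n + 1)),
      Measure.map (fun ω => V ω ∘ σ) μ = Measure.map V μ)
    (s : Fin (n + 1) → ℝ)
    (w : Fin (n + 1) → ℝ) (hw0 : ∀ i, 0 ≤ w i) (hw1 : ∑ i, w i = 1)
    (E : Set Ω) (hE : E = {ω | Multiset.map (V ω) Finset.univ.val =
      Multiset.map s Finset.univ.val})
    (hcond : ∀ i, μ[|E] {ω | V ω (Fin.last n) = s i} = ENNReal.ofReal (w i))
    (α : ℝ) (hα : α ∈ Set.Ioo (0 : ℝ) 1)
    (qhat : ℝ)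
    (hqhat : qhat = sInf {q : ℝ |
      1 - α ≤ ∑ i ∈ Finset.univ.filter fun i : Fin (n + 1) => s i ≤ q, w i}) :
    ENNReal.ofReal (1 - α) ≤ μ[|E] {ω | V ω (Fin.last n) ≤ qhat} :=
  weighted_exchangeability_coverage_general μ n V s w hw0 hw1 E hE hcond α hα qhat hqhat
end

section
/- Let X be a finite set, D a distribution on X, and c, c* : X → Δ^K. Suppose D = Σ_k λ_k P_k is a mixture such that E_{x∼P_k}[c*(x)] = e_k (the k-th standard basis vector) for each k, and c is multiaccurate with respect to every distribution in the family {Σ_k μ_k P_k : μ ∈ Δ^K}. Then E_{x∼D}[c(x)] = λ. -/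
open Finset

theorem sum_mixture_mul {E ι : Type*} [Fintype E] [Fintype ι]
    (mu : ι → ℝ) (P : ι → E → ℝ) (f : E → ℝ) :
    ∑ x, (∑ k, mu k * P k x) * f x = ∑ k, mu k * ∑ x, P k x * f x := by
  simp only [sum_mul, mul_sum, mul_assoc]
  exact sum_comm

theorem multiaccurate_mean_equals_mixture_general
    {E : Type*} [Fintype E] (K : ℕ)
    (P : Fin K → E → ℝ)
    (lam : Fin K → ℝ) (hlam0 : ∀ k, 0 ≤ lam k) (hlam1 : ∑ k, lam k = 1)
    (c cstar : E → Fin K → ℝ)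
    (horacle : ∀ k j, ∑ x, P k x * cstar x j = if j = k then 1 else 0)
    (hma : ∀ mu : Fin K → ℝ, (∀ k, 0 ≤ mu k) → ∑ k, mu k = 1 →
      ∀ j, ∑ x, (∑ k, mu k * P k x) * c x j = ∑ x, (∑ k, mu k * P k x) * cstar x j) :
    ∀ j, ∑ x, (∑ k, lam k * P k x) * c x j = lam j := by
  intro j
  calc ∑ x, (∑ k, lam k * P k x) * c x j
      = ∑ x, (∑ k, lam k * P k x) * cstar x j := hma lam hlam0 hlam1 j
    _ = ∑ k, lam k * ∑ x, P k x * cstar x j := sum_mixture_mul lam P (cstar · j)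
    _ = lam j := by simp [horacle]

/-- Multiaccuracy with respect to all mixture test environments, combined with the oracle
identity E_{P_k}[c*] = e_k, forces the mean classifier output under the mixture with weights
λ to equal λ. -/
theorem multiaccurate_mean_equals_mixture
    {E : Type*} [Fintype E] (K : ℕ) (hK : 1 ≤ K)
    (P : Fin K → E → ℝ) (hP0 : ∀ k x, 0 ≤ P k x) (hP1 : ∀ k, ∑ x, P k x = 1)
    (lam : Fin K → ℝ) (hlam0 : ∀ k, 0 ≤ lam k) (hlam1 : ∑ k, lam k = 1)
    (c cstar : E → Fin K → ℝ)
    (horacle : ∀ k j, ∑ x, P k x * cstar x j = if j = k then 1 else 0)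
    (hma : ∀ mu : Fin K → ℝ, (∀ k, 0 ≤ mu k) → ∑ k, mu k = 1 →
      ∀ j, ∑ x, (∑ k, mu k * P k x) * c x j = ∑ x, (∑ k, mu k * P k x) * cstar x j) :
    ∀ j, ∑ x, (∑ k, lam k * P k x) * c x j = lam j :=
  multiaccurate_mean_equals_mixture_general K P lam hlam0 hlam1 c cstar horacle hma
end
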